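/- arXiv:2406.13401 — 11 statements merged into one kernel-verified Lean document; each statement's English description precedes it below -/
import Mathlib

section
/- Let N and H be groups and φ : H → Sym(N)₁ a group homomorphism. Then the semidirect product loop L = N ⋊_φ H is associative (i.e., is a group) if and only if φ(h) is an automorphism of N for every h ∈ H. -/
/-- A loop: a set with multiplication, a two-sided identity, and unique
solvability of the equations `x * a = b` and `a * x = b`. -/
class MLoop (α : Type*) extends Mul α, One α where
  one_mul : ∀ a : α, 1 * a = a
  mul_one : ∀ a : α, a * 1 = a
  existsUnique_left : ∀ a b : α, ∃! x : α, x * a = b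
  existsUnique_right : ∀ a b : α, ∃! x : α, a * x = b

/-- Multiplication of the semidirect product `N ⋊_φ H` on the set `N × H`:
`(n₁,h₁)·(n₂,h₂) = (n₁·φ(h₁)(n₂), h₁h₂)`. -/
def sdMul {N H : Type*} [Mul N] [Group H] (φ : H →* Equiv.Perm N)
    (p q : N × H) : N × H :=
  (p.1 * φ p.2 q.1, p.2 * q.2)

theorem stmt5 {N H : Type*} [Group N] [Group H] (φ : H →* Equiv.Perm N)
    (hφ : ∀ h : H, φ h 1 = 1) :
    (∀ a b c : N × H, sdMul φ (sdMul φ a b) c = sdMul φ a (sdMul φ b c)) ↔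
    (∀ h : H, ∀ n₁ n₂ : N, φ h (n₁ * n₂) = φ h n₁ * φ h n₂) := by
  constructor
  · intro h hh n₁ n₂
    have := h (1, hh) (n₁, 1) (n₂, 1)
    simp [sdMul, Prod.ext_iff, hφ] at this
    exact this.symm
  · intro h a b c
    simp [sdMul, Prod.ext_iff, map_mul, h, mul_assoc]
end

section
/- Let L = N ⋊_φ H where N is a loop with the left inverse property and H is a group. Then the commutant of L equals {(x,y) : x ∈ Fix(φ), y ∈ Z(H), and φ(y)(a) = x⁻¹(ax) for all a ∈ N}, where Fix(φ) = {n ∈ N : φ(h)(n) = n for all h ∈ H}. -/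
lemma lip_right {N : Type*} [MLoop N] (inv : N → N)
    (hinv : ∀ n x : N, inv n * (n * x) = x) (n z : N) :
    n * (inv n * z) = z := by
  have h1 : ∀ w : N, inv (inv n) * w = n * w := by
    intro w
    have := hinv (inv n) (n * w)
    rwa [hinv n w] at this
  have h2 : inv (inv n) = n := by
    have := h1 1
    rwa [MLoop.mul_one, MLoop.mul_one] at this
  have := hinv (inv n) z
  rwa [h2] at this

theorem stmt6 {N H : Type*} [MLoop N] [Group H] (φ : H →* Equiv.Perm N)
    (hφ : ∀ h : H, φ h 1 = 1)
    (inv : N → N) (hinv : ∀ n x : N, inv n * (n * x) = x) :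
    -- the commutant of L equals the described set
    {p : N × H | ∀ q : N × H, sdMul φ p q = sdMul φ q p} =
      {p : N × H | (∀ h : H, φ h p.1 = p.1) ∧ p.2 ∈ Subgroup.center H ∧
        ∀ a : N, φ p.2 a = inv p.1 * (a * p.1)} := by
  ext ⟨x, y⟩
  simp only [Set.mem_setOf_eq, Prod.ext_iff, sdMul]
  constructor
  · intro hc
    refine ⟨?_, ?_, ?_⟩
    · intro h
      have := (hc (1, h)).1
      simpa [hφ, MLoop.mul_one, MLoop.one_mul] using this.symm
    · rw [Subgroup.mem_center_iff]
      intro h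
      exact (hc (1, h)).2.symm
    · intro a
      have := (hc (a, 1)).1
      simp only [map_one, Equiv.Perm.coe_one, id_eq] at this
      rw [← this, hinv]
  · rintro ⟨hfix, hcen, heq⟩ ⟨a, h⟩
    constructor
    · simp only [heq a, hfix h, lip_right inv hinv]
    · exact ((Subgroup.mem_center_iff.mp hcen) h).symm
end

section
/- Let L = N ⋊_φ H be a semidirect product loop. Then the middle nucleus of L equals {(x,y) : for all h ∈ H and n ∈ N, φ(h)(x·φ(y)(n)) = φ(h)(x)·φ(hy)(n), and φ(h)(x) ∈ N_μ(N) for all h ∈ H}. -/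
theorem stmt7 {N H : Type*} [MLoop N] [Group H] (φ : H →* Equiv.Perm N)
    (hφ : ∀ h : H, φ h 1 = 1) :
    -- the middle nucleus of L equals the described set
    {p : N × H | ∀ x y : N × H, sdMul φ x (sdMul φ p y) = sdMul φ (sdMul φ x p) y} =
      {p : N × H |
        (∀ h : H, ∀ n : N, φ h (p.1 * φ p.2 n) = φ h p.1 * φ (h * p.2) n) ∧
        (∀ h : H, ∀ x y : N, x * (φ h p.1 * y) = (x * φ h p.1) * y)} := by
  ext p
  simp only [Set.mem_setOf_eq]
  constructor
  · intro hC
    have hA : ∀ h : H, ∀ n : N, φ h (p.1 * φ p.2 n) = φ h p.1 * φ (h * p.2) n := by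
      intro h n
      have := congrArg Prod.fst (hC (1, h) (n, 1))
      simpa [sdMul, MLoop.one_mul] using this
    refine ⟨hA, ?_⟩
    intro h x y
    have := congrArg Prod.fst (hC (x, h) ((φ (h * p.2)).symm y, 1))
    simp only [sdMul] at this
    rw [hA h ((φ (h * p.2)).symm y)] at this
    simpa using this
  · rintro ⟨hA, hB⟩ x y
    simp only [sdMul, Prod.ext_iff, mul_assoc, and_true, eq_self_iff_true]
    rw [hA x.2 y.1]
    exact hB x.2 x.1 (φ (x.2 * p.2) y.1)
end

section
/- Let L = N ⋊_φ H be a semidirect product loop. Then the right nucleus of L equals {(x,y) : for all h,h' ∈ H and n ∈ N, φ(h)(n·φ(h')(x)) = φ(h)(n)·φ(hh')(x), and φ(h)(x) ∈ N_ρ(N) for all h ∈ H}. -/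
theorem stmt8 {N H : Type*} [MLoop N] [Group H] (φ : H →* Equiv.Perm N)
    (hφ : ∀ h : H, φ h 1 = 1) :
    -- the right nucleus of L equals the described set
    {p : N × H | ∀ x y : N × H, sdMul φ x (sdMul φ y p) = sdMul φ (sdMul φ x y) p} =
      {p : N × H |
        (∀ h h' : H, ∀ n : N, φ h (n * φ h' p.1) = φ h n * φ (h * h') p.1) ∧
        (∀ h : H, ∀ x y : N, x * (y * φ h p.1) = (x * y) * φ h p.1)} := by
  ext p
  simp only [Set.mem_setOf_eq]
  constructor
  · intro hp
    constructor
    · intro h h' n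
      have := hp (1, h) (n, h')
      simp only [sdMul, Prod.mk.injEq] at this
      have t := this.1
      rwa [MLoop.one_mul, MLoop.one_mul] at t
    · intro h x y
      have := hp (x, 1) (y, h)
      simp only [sdMul, map_one, Equiv.Perm.coe_one, id_eq, Prod.mk.injEq, one_mul] at this
      exact this.1
  · rintro ⟨h1, h2⟩ ⟨a, g⟩ ⟨b, h⟩
    simp only [sdMul, Prod.mk.injEq]
    refine ⟨?_, (mul_assoc g h p.2).symm⟩
    rw [h1 g h b, h2]
end

section
/- Let L = N ⋊_φ H where N and H are abelian groups. Then the commutant of L equals {(x,y) : x ∈ Fix(φ) and y ∈ ker(φ)}, where Fix(φ) = {n ∈ N : φ(h)(n) = n for all h ∈ H}. -/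
theorem stmt10 {N H : Type*} [CommGroup N] [CommGroup H] (φ : H →* Equiv.Perm N)
    (hφ : ∀ h : H, φ h 1 = 1) :
    {p : N × H | ∀ q : N × H, sdMul φ p q = sdMul φ q p} =
      {p : N × H | (∀ h : H, φ h p.1 = p.1) ∧ p.2 ∈ φ.ker} := by
  ext p
  simp only [Set.mem_setOf_eq, sdMul, Prod.mk.injEq, MonoidHom.mem_ker]
  constructor
  · intro hc
    have hfix : ∀ h : H, φ h p.1 = p.1 := by
      intro h
      have := (hc (1, h)).1
      simpa [hφ] using this.symm
    refine ⟨hfix, ?_⟩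
    ext n
    have := (hc (n, 1)).1
    have h2 : p.1 * φ p.2 n = n * p.1 := by simpa [hfix 1] using this
    have : φ p.2 n = n := by
      have := h2
      rw [mul_comm n p.1] at this
      exact mul_left_cancel this
    simpa using this
  · rintro ⟨hfix, hker⟩ q
    constructor
    · rw [hker, hfix q.2]
      simp [mul_comm]
    · exact mul_comm _ _
end

section
/- Let L = N ⋊_φ H where N is an abelian group and H is a group. Then the right nucleus and the middle nucleus of L coincide: N_ρ(L) = N_μ(L). -/
theorem stmt11 {N H : Type*} [CommGroup N] [Group H] (φ : H →* Equiv.Perm N)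
    (hφ : ∀ h : H, φ h 1 = 1) :
    -- right nucleus = middle nucleus
    {p : N × H | ∀ x y : N × H, sdMul φ x (sdMul φ y p) = sdMul φ (sdMul φ x y) p} =
      {p : N × H | ∀ x y : N × H, sdMul φ x (sdMul φ p y) = sdMul φ (sdMul φ x p) y} := by
  ext ⟨a, h⟩
  simp only [Set.mem_setOf_eq, Prod.forall, sdMul, Prod.mk.injEq, map_mul,
    Equiv.Perm.mul_apply, mul_assoc, mul_left_cancel_iff, and_true, eq_self_iff_true]
  constructor
  · intro Hc n₁ h₁ n₂ h₂
    have S : ∀ g b, φ g (b * a) = φ g b * φ g a := by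
      intro g b
      have := Hc 1 g b 1
      simpa using this
    rw [mul_comm a, S, mul_comm]
  · intro Hc n₁ h₁ n₂ h₂
    have S : ∀ g b, φ g (a * b) = φ g a * φ g b := by
      intro g b
      have := Hc 1 g ((φ h).symm b) 1
      simpa using this
    set m := (φ h₂).symm n₂ with hmdef
    have hm : φ h₂ m = n₂ := Equiv.apply_symm_apply _ _
    calc φ h₁ (n₂ * φ h₂ a) = φ h₁ (φ h₂ (a * m)) := by rw [S, hm, mul_comm]
      _ = φ (h₁ * h₂) (a * m) := by rw [map_mul φ h₁ h₂, Equiv.Perm.mul_apply]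
      _ = φ (h₁ * h₂) a * φ (h₁ * h₂) m := S _ _
      _ = φ h₁ n₂ * φ h₁ (φ h₂ a) := by
          rw [map_mul φ h₁ h₂]
          simp only [Equiv.Perm.mul_apply, hm]
          exact mul_comm _ _
end

section
/- Let L = N ⋊_φ H where N is a group and H is a group. Then the left nucleus N_λ(L) is a group; moreover N_λ(L) = {(x,y) : φ(y) ∈ Aut(N)}. -/
theorem stmt13 {N H : Type*} [Group N] [Group H] (φ : H →* Equiv.Perm N)
    (hφ : ∀ h : H, φ h 1 = 1)
    (Λ : Set (N × H))
    (hΛ : Λ = {p : N × H | ∀ x y : N × H,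
      sdMul φ p (sdMul φ x y) = sdMul φ (sdMul φ p x) y}) :
    -- the left nucleus is a group
    (((1, 1) : N × H) ∈ Λ) ∧
    (∀ p ∈ Λ, ∀ q ∈ Λ, sdMul φ p q ∈ Λ) ∧
    (∀ p ∈ Λ, ∀ q ∈ Λ, ∀ r ∈ Λ,
      sdMul φ p (sdMul φ q r) = sdMul φ (sdMul φ p q) r) ∧
    (∀ p ∈ Λ, ∃ q ∈ Λ, sdMul φ p q = (1, 1) ∧ sdMul φ q p = (1, 1)) ∧
    -- moreover it equals {(x,y) : φ(y) ∈ Aut(N)}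
    (Λ = {p : N × H | ∀ a b : N, φ p.2 (a * b) = φ p.2 a * φ p.2 b}) := by
  have hset : Λ = {p : N × H | ∀ a b : N, φ p.2 (a * b) = φ p.2 a * φ p.2 b} := by
    ext p
    simp only [hΛ, Set.mem_setOf_eq, sdMul, Prod.mk.injEq]
    constructor
    · intro h a b
      have := (h (a, 1) (b, 1)).1
      simp only [map_one, Equiv.Perm.coe_one, id_eq, mul_one] at this
      exact mul_left_cancel (this.trans (mul_assoc _ _ _))
    · intro h x y
      constructor
      · rw [h, map_mul φ, mul_assoc]
        rfl
      · exact (mul_assoc _ _ _).symm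
  have hmem : ∀ p : N × H, p ∈ Λ ↔ ∀ a b : N, φ p.2 (a * b) = φ p.2 a * φ p.2 b := by
    intro p; rw [hset]; rfl
  refine ⟨?_, ?_, ?_, ?_, hset⟩
  · rw [hmem]; intro a b; simp
  · intro p hp q hq
    rw [hmem] at hp hq ⊢
    intro a b
    simp only [sdMul, map_mul φ, Equiv.Perm.mul_apply, hq, hp]
  · intro p hp q _ r _
    rw [hΛ] at hp
    exact hp q r
  · intro p hp
    refine ⟨((φ p.2).symm p.1⁻¹, p.2⁻¹), ?_, ?_, ?_⟩
    · rw [hmem] at hp ⊢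
      intro a b
      have : φ p.2⁻¹ = (φ p.2).symm := by
        rw [map_inv]; rfl
      rw [this]
      apply (φ p.2).injective
      rw [hp, Equiv.apply_symm_apply, Equiv.apply_symm_apply, Equiv.apply_symm_apply]
    · simp only [sdMul, Prod.mk.injEq]
      exact ⟨by rw [Equiv.apply_symm_apply, mul_inv_cancel], mul_inv_cancel p.2⟩
    · rw [hmem] at hp
      simp only [sdMul, Prod.mk.injEq]
      have hinv : φ p.2⁻¹ = (φ p.2).symm := by rw [map_inv]; rfl
      have h1 : (φ p.2).symm 1 = 1 := by
        apply (φ p.2).injective; rw [Equiv.apply_symm_apply, hφ]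
      refine ⟨?_, inv_mul_cancel p.2⟩
      rw [hinv]
      apply (φ p.2).injective
      rw [hp, Equiv.apply_symm_apply, Equiv.apply_symm_apply, inv_mul_cancel, hφ]
end

section
/- Let L₁ = N ⋊_φ H and L₂ = N ⋊_ψ H be semidirect product loops with ker(φ) = {1} = ker(ψ), where N is a group. If φ(H) and ψ(H) are conjugate subgroups in Aut(N), then L₁ is isomorphic to L₂ as loops. -/
/-!
If `α` conjugates `φ(H)` onto `ψ(H)`, injectivity of `φ` and `ψ` turns conjugation by `α` into
an automorphism `θ` of `H` with `ψ ∘ θ = conj α ∘ φ`; then `α × θ` intertwines the two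
multiplications.
-/

/-- Multiplication of the semidirect product `N ⋊_φ H` where the action
is by automorphisms of the group `N`:
`(n₁,h₁)·(n₂,h₂) = (n₁·φ(h₁)(n₂), h₁h₂)`. -/
def sdMulA {N H : Type*} [Group N] [Group H] (φ : H →* MulAut N)
    (p q : N × H) : N × H :=
  (p.1 * φ p.2 q.1, p.2 * q.2)

section

variable {N H : Type*} [Group N] [Group H]

theorem prodCongr_sdMulA_of_conj (φ ψ : H →* MulAut N) (α : MulAut N) (θ : H ≃* H)
    (hθ : ∀ h, ψ (θ h) = MulAut.conj α (φ h)) (p q : N × H) :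
    Equiv.prodCongr α.toEquiv θ.toEquiv (sdMulA φ p q) =
      sdMulA ψ (Equiv.prodCongr α.toEquiv θ.toEquiv p)
        (Equiv.prodCongr α.toEquiv θ.toEquiv q) := by
  simp [sdMulA, hθ]

theorem map_conj_range_eq (φ ψ : H →* MulAut N) (α : MulAut N)
    (hα : ∀ σ : MulAut N, σ ∈ φ.range ↔ α * σ * α⁻¹ ∈ ψ.range) :
    φ.range.map (MulAut.conj α : MulAut N →* MulAut N) = ψ.range := by
  ext τ
  rw [← MulEquiv.toMonoidHom_eq_coe, Subgroup.mem_map_equiv, hα]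
  simp [mul_assoc]

theorem exists_mulEquiv_comp_eq_conj (φ ψ : H →* MulAut N) (hφ : Function.Injective φ)
    (hψ : Function.Injective ψ) (α : MulAut N)
    (hα : φ.range.map (MulAut.conj α : MulAut N →* MulAut N) = ψ.range) :
    ∃ θ : H ≃* H, ∀ h, ψ (θ h) = MulAut.conj α (φ h) := by
  have hψ_symm : ∀ y : ψ.range, ψ ((MonoidHom.ofInjective hψ).symm y) = y := fun y => by
    rw [← MonoidHom.ofInjective_apply hψ, MulEquiv.apply_symm_apply]
  refine ⟨((MonoidHom.ofInjective hφ).trans ((MulAut.conj α).subgroupMap φ.range)).trans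
    ((MulEquiv.subgroupCongr hα).trans (MonoidHom.ofInjective hψ).symm), fun h => ?_⟩
  rw [MulEquiv.trans_apply, MulEquiv.trans_apply, hψ_symm]
  rfl

end

theorem stmt15 {N H : Type*} [Group N] [Group H] (φ ψ : H →* MulAut N)
    (hφ : Function.Injective φ)   -- ker φ = {1}
    (hψ : Function.Injective ψ)   -- ker ψ = {1}
    -- φ(H) and ψ(H) are conjugate in Aut(N)
    (hconj : ∃ α : MulAut N, ∀ σ : MulAut N,
      σ ∈ φ.range ↔ α * σ * α⁻¹ ∈ ψ.range) :
    -- L₁ ≃ L₂ as loops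
    ∃ F : N × H ≃ N × H, ∀ p q : N × H,
      F (sdMulA φ p q) = sdMulA ψ (F p) (F q) := by
  obtain ⟨α, hα⟩ := hconj
  obtain ⟨θ, hθ⟩ :=
    exists_mulEquiv_comp_eq_conj φ ψ hφ hψ α (map_conj_range_eq φ ψ α hα)
  exact ⟨_, prodCongr_sdMulA_of_conj φ ψ α θ hθ⟩
end

section
/- Let L = ℤ_m ⋊_φ ℤ_p be a metacyclic loop (p prime) which is not a group, where φ : ℤ_p → Sym(ℤ_m)₀ is a group homomorphism. Then the left nucleus N_λ(L) = {(x,0) : x ∈ ℤ_m} and is isomorphic to ℤ_m. -/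
/-- Multiplication of the metacyclic loop `ℤ_m ⋊_φ ℤ_p`:
`(n₁,h₁)·(n₂,h₂) = (n₁ + φ(h₁)(n₂), h₁ + h₂)`. -/
def zMul {m p : ℕ} (φ : ZMod p → Equiv.Perm (ZMod m))
    (a b : ZMod m × ZMod p) : ZMod m × ZMod p :=
  (a.1 + φ a.2 b.1, a.2 + b.2)

theorem stmt16 {m p : ℕ} (hp : p.Prime)
    (φ : ZMod p → Equiv.Perm (ZMod m))
    (hhom : ∀ a b : ZMod p, φ (a + b) = φ a * φ b)  -- φ is a group homomorphism
    (hφ0 : ∀ a : ZMod p, φ a 0 = 0)                 -- into the stabilizer of 0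
    (hng : ¬ ∀ a b c : ZMod m × ZMod p,
      zMul φ a (zMul φ b c) = zMul φ (zMul φ a b) c)  -- L is not a group
    :
    -- the left nucleus is {(x,0) : x ∈ ℤ_m} ...
    {a : ZMod m × ZMod p | ∀ x y : ZMod m × ZMod p,
        zMul φ a (zMul φ x y) = zMul φ (zMul φ a x) y} =
      {a : ZMod m × ZMod p | a.2 = 0} ∧
    -- ... and it is isomorphic to ℤ_m via x ↦ (x,0)
    (∀ x y : ZMod m, zMul φ (x, 0) (y, 0) = (x + y, 0)) ∧
    Function.Injective (fun x : ZMod m => ((x, 0) : ZMod m × ZMod p)) := by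
  haveI : Fact p.Prime := ⟨hp⟩
  have hφ0one : φ 0 = 1 := by
    have h := hhom 0 0
    simp only [add_zero] at h
    have : φ 0 * 1 = φ 0 * φ 0 := by rw [mul_one]; exact h
    exact (mul_left_cancel this).symm
  -- additivity of φ h for h ≠ 0 forces associativity
  have key : ∀ h : ZMod p, h ≠ 0 →
      (∀ u v : ZMod m, φ h (u + v) = φ h u + φ h v) → False := by
    intro h hne hadd
    apply hng
    -- every element's perm is additive
    have hpow : ∀ k : ℕ, ∀ u v : ZMod m,
        φ (k • h) (u + v) = φ (k • h) u + φ (k • h) v := by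
      intro k
      induction k with
      | zero => intro u v; simp [hφ0one]
      | succ n ih =>
        intro u v
        have : ((n + 1 : ℕ) • h) = (n • h) + h := by
          rw [add_smul, one_smul]
        rw [this, hhom]
        simp only [Equiv.Perm.mul_apply]
        rw [hadd, ih]
    have hall : ∀ a : ZMod p, ∀ u v : ZMod m, φ a (u + v) = φ a u + φ a v := by
      intro a u v
      by_cases ha : a = 0
      · simp [ha, hφ0one]
      · set c : ZMod p := a * h⁻¹ with hc
        have hrep : a = (c.val : ℕ) • h := by
          rw [nsmul_eq_mul, ZMod.natCast_val, ZMod.cast_id, hc,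
            mul_assoc, inv_mul_cancel₀ hne, mul_one]
        rw [hrep]
        exact hpow c.val u v
    intro a b c
    unfold zMul
    ext
    · simp only
      rw [hhom, Equiv.Perm.mul_apply, hall, add_assoc]
    · simp only
      rw [add_assoc]
  constructor
  · ext a
    simp only [Set.mem_setOf_eq]
    constructor
    · intro hmem
      by_contra hne
      apply key a.2 hne
      intro u v
      have h := hmem (u, 0) (v, 0)
      unfold zMul at h
      simp only [hφ0one, Equiv.Perm.one_apply, add_zero] at h
      have h1 := congrArg Prod.fst h
      simp only at h1
      have : φ a.2 (u + v) = φ a.2 u + φ a.2 v := by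
        have := add_left_cancel ((add_assoc a.1 (φ a.2 u) (φ a.2 v)) ▸ h1)
        exact this
      exact this
    · intro ha x y
      unfold zMul
      rw [ha]
      simp [hφ0one, add_assoc]
  constructor
  · intro x y
    unfold zMul
    simp [hφ0one]
  · intro x y hxy
    exact congrArg Prod.fst hxy
end

section
/- Let L = ℤ_m ⋊_φ ℤ_p be a metacyclic loop (p prime) which is not a group. Then the order of the right nucleus N_ρ(L) equals p·r where r is a proper divisor of m (r divides m and r ≠ m). -/
theorem stmt17 {m p : ℕ} (hm : 0 < m) (hp : p.Prime)
    (φ : ZMod p → Equiv.Perm (ZMod m))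
    (hhom : ∀ a b : ZMod p, φ (a + b) = φ a * φ b)
    (hφ0 : ∀ a : ZMod p, φ a 0 = 0)
    (hng : ¬ ∀ a b c : ZMod m × ZMod p,
      zMul φ a (zMul φ b c) = zMul φ (zMul φ a b) c) :
    ∃ r : ℕ, r ∣ m ∧ r ≠ m ∧
      Nat.card {a : ZMod m × ZMod p // ∀ x y : ZMod m × ZMod p,
        zMul φ x (zMul φ y a) = zMul φ (zMul φ x y) a} = p * r := by
  have hmz : NeZero m := ⟨hm.ne'⟩
  have hφzero : φ 0 = 1 := by
    have h := hhom 0 0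
    simp only [add_zero] at h
    exact (mul_left_cancel (a := φ 0) (by rw [mul_one]; exact h)).symm
  -- auxiliary: φ g (s + t) = φ g s + φ g t when t has the property
  have key : ∀ t : ZMod m,
      (∀ g h : ZMod p, ∀ n : ZMod m, φ h (n + φ g t) = φ h n + φ h (φ g t)) →
      ∀ g : ZMod p, ∀ n : ZMod m, φ g (n + t) = φ g n + φ g t := by
    intro t ht g n
    have := ht 0 g n
    simpa [hφzero] using this
  have keyneg : ∀ t : ZMod m,
      (∀ g h : ZMod p, ∀ n : ZMod m, φ h (n + φ g t) = φ h n + φ h (φ g t)) →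
      ∀ g : ZMod p, φ g (-t) = - φ g t := by
    intro t ht g
    have := key t ht g (-t)
    simp only [neg_add_cancel, hφ0] at this
    exact eq_neg_of_add_eq_zero_left this.symm
  set S : AddSubgroup (ZMod m) :=
    { carrier := {t | ∀ g h : ZMod p, ∀ n : ZMod m,
        φ h (n + φ g t) = φ h n + φ h (φ g t)}
      zero_mem' := by
        intro g h n
        simp [hφ0]
      add_mem' := by
        intro s t hs ht g h n
        have hst : φ g (s + t) = φ g s + φ g t := key t ht g s
        rw [hst, ← add_assoc, ht g h (n + φ g s), hs g h n,
          ht g h (φ g s), add_assoc]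
      neg_mem' := by
        intro t ht g h n
        have h1 : φ h (n - φ g t + φ g t) = φ h (n - φ g t) + φ h (φ g t) :=
          ht g h (n - φ g t)
        rw [sub_add_cancel] at h1
        have h2 : φ h (-(φ g t)) = - φ h (φ g t) := by
          have h3 := ht g h (-(φ g t))
          simp only [neg_add_cancel, hφ0] at h3
          exact eq_neg_of_add_eq_zero_left h3.symm
        rw [keyneg t ht g, h2, ← sub_eq_add_neg, ← sub_eq_add_neg]
        linear_combination -h1 } with hSdef
  have hmemS : ∀ t : ZMod m, t ∈ S ↔
      ∀ g h : ZMod p, ∀ n : ZMod m, φ h (n + φ g t) = φ h n + φ h (φ g t) :=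
    fun t => Iff.rfl
  -- characterization of nucleus membership
  have hiff : ∀ a : ZMod m × ZMod p,
      (∀ x y : ZMod m × ZMod p,
        zMul φ x (zMul φ y a) = zMul φ (zMul φ x y) a) ↔ a.1 ∈ S := by
    intro a
    constructor
    · intro ha g h n
      have := ha (0, h) (n, g)
      simp only [zMul, Prod.mk.injEq] at this
      have h1 := this.1
      rw [zero_add, zero_add, hhom h g] at h1
      simpa using h1
    · intro ha x y
      have h1 : φ x.2 (y.1 + φ y.2 a.1) = φ x.2 y.1 + φ x.2 (φ y.2 a.1) :=
        ha y.2 x.2 y.1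
      simp only [zMul, Prod.mk.injEq]
      constructor
      · rw [h1, hhom x.2 y.2]
        simp [add_assoc]
      · rw [add_assoc]
  -- r ≠ m : otherwise everything associates
  have hne : Nat.card S ≠ m := by
    intro hcard
    apply hng
    have htop : S = ⊤ := by
      apply AddSubgroup.eq_top_of_card_eq
      rw [hcard, Nat.card_zmod]
    intro a b c
    exact (hiff c).mpr (htop ▸ AddSubgroup.mem_top c.1) a b
  -- cardinality
  have e : {a : ZMod m × ZMod p // ∀ x y : ZMod m × ZMod p,
      zMul φ x (zMul φ y a) = zMul φ (zMul φ x y) a} ≃ S × ZMod p :=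
    { toFun := fun a => (⟨a.1.1, (hiff a.1).mp a.2⟩, a.1.2)
      invFun := fun s => ⟨(s.1.1, s.2), (hiff _).mpr s.1.2⟩
      left_inv := fun a => by ext <;> rfl
      right_inv := fun s => by ext <;> rfl }
  refine ⟨Nat.card S, ?_, hne, ?_⟩
  · have := AddSubgroup.card_addSubgroup_dvd_card S
    rwa [Nat.card_zmod] at this
  · rw [Nat.card_congr e, Nat.card_prod, Nat.card_zmod, mul_comm]
end

section
/- Let L = ℤ_m ⋊_φ ℤ_p be a metacyclic loop (p prime) which is not a group. Then the nucleus N(L) = N_λ(L) ∩ N_μ(L) ∩ N_ρ(L) is a group whose order r is a proper divisor of m. -/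
/-- `n` is an "additive point": every `φ g` is additive at `n`. -/
def InA {m p : ℕ} (φ : ZMod p → Equiv.Perm (ZMod m)) (n : ZMod m) : Prop :=
  ∀ g : ZMod p, ∀ u : ZMod m, φ g (n + u) = φ g n + φ g u

section aux
variable {m p : ℕ} {φ : ZMod p → Equiv.Perm (ZMod m)}

lemma phi_zero (hhom : ∀ a b : ZMod p, φ (a + b) = φ a * φ b) : φ 0 = 1 := by
  have h : φ 0 = φ 0 * φ 0 := by simpa using hhom 0 0
  have h2 : φ 0 * (1 : Equiv.Perm (ZMod m)) = φ 0 * φ 0 := by rw [mul_one]; exact h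
  exact (mul_left_cancel h2).symm

lemma InA_zero (hφ0 : ∀ a : ZMod p, φ a 0 = 0) : InA φ 0 := by
  intro g u; rw [zero_add, hφ0, zero_add]

lemma InA.neg_apply {n : ZMod m} (hφ0 : ∀ a : ZMod p, φ a 0 = 0)
    (hn : InA φ n) (g : ZMod p) : φ g (-n) = -(φ g n) := by
  have h := hn g (-n)
  rw [add_neg_cancel, hφ0] at h
  exact eq_neg_of_add_eq_zero_left (by linear_combination -h)

lemma InA.add {n n' : ZMod m} (hn : InA φ n) (hn' : InA φ n') : InA φ (n + n') := by
  intro g u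
  rw [add_assoc, hn g (n' + u), hn' g u, hn g n', add_assoc]

lemma InA.neg {n : ZMod m} (hφ0 : ∀ a : ZMod p, φ a 0 = 0)
    (hn : InA φ n) : InA φ (-n) := by
  intro g u
  have h := hn g (-n + u)
  rw [add_neg_cancel_left] at h
  rw [hn.neg_apply hφ0 g]
  linear_combination -h

/-- If some nonzero `h` has `φ h` additive, then every `φ g` is additive. -/
lemma all_additive (hp : p.Prime)
    (hhom : ∀ a b : ZMod p, φ (a + b) = φ a * φ b)
    {h : ZMod p} (hne : h ≠ 0)
    (hadd : ∀ u v : ZMod m, φ h (u + v) = φ h u + φ h v)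
    (g : ZMod p) (u v : ZMod m) : φ g (u + v) = φ g u + φ g v := by
  haveI : Fact p.Prime := ⟨hp⟩
  have hpow : ∀ t : ℕ, ∀ u v : ZMod m,
      ((φ h) ^ t) (u + v) = ((φ h) ^ t) u + ((φ h) ^ t) v := by
    intro t
    induction t with
    | zero => intro u v; simp
    | succ t ih =>
      intro u v
      rw [pow_succ', Equiv.Perm.mul_apply, Equiv.Perm.mul_apply, Equiv.Perm.mul_apply,
        ih, hadd]
  have hsm : ∀ t : ℕ, φ ((t : ℕ) • h) = (φ h) ^ t := by
    intro t
    induction t with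
    | zero => simpa using phi_zero hhom
    | succ t ih => rw [succ_nsmul, hhom, ih, pow_succ]
  have hg : ((g * h⁻¹).val : ℕ) • h = g := by
    rw [nsmul_eq_mul, ZMod.natCast_val, ZMod.cast_id, mul_assoc,
      inv_mul_cancel₀ hne, mul_one]
  rw [← hg, hsm]
  exact hpow _ u v

end aux

theorem stmt18 {m p : ℕ} (hm : 0 < m) (hp : p.Prime)
    (φ : ZMod p → Equiv.Perm (ZMod m))
    (hhom : ∀ a b : ZMod p, φ (a + b) = φ a * φ b)
    (hφ0 : ∀ a : ZMod p, φ a 0 = 0)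
    (hng : ¬ ∀ a b c : ZMod m × ZMod p,
      zMul φ a (zMul φ b c) = zMul φ (zMul φ a b) c)
    (Nu : Set (ZMod m × ZMod p))
    (hNu : Nu = {a : ZMod m × ZMod p |
      (∀ x y : ZMod m × ZMod p, zMul φ a (zMul φ x y) = zMul φ (zMul φ a x) y) ∧
      (∀ x y : ZMod m × ZMod p, zMul φ x (zMul φ a y) = zMul φ (zMul φ x a) y) ∧
      (∀ x y : ZMod m × ZMod p, zMul φ x (zMul φ y a) = zMul φ (zMul φ x y) a)}) :
    -- the nucleus is a group ...
    (((0, 0) : ZMod m × ZMod p) ∈ Nu) ∧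
    (∀ a ∈ Nu, ∀ b ∈ Nu, zMul φ a b ∈ Nu) ∧
    (∀ a ∈ Nu, ∀ b ∈ Nu, ∀ c ∈ Nu,
      zMul φ a (zMul φ b c) = zMul φ (zMul φ a b) c) ∧
    (∀ a ∈ Nu, ∃ b ∈ Nu, zMul φ a b = (0, 0) ∧ zMul φ b a = (0, 0)) ∧
    -- ... whose order is a proper divisor of m
    (∃ r : ℕ, r ∣ m ∧ r ≠ m ∧ Nat.card Nu = r) := by
  haveI : NeZero m := ⟨hm.ne'⟩
  have hz : φ 0 = 1 := phi_zero hhom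
  -- not everything is additive
  have hex : ¬ ∀ (g : ZMod p) (u v : ZMod m), φ g (u + v) = φ g u + φ g v := by
    intro hall
    apply hng
    intro a b c
    have h1 : φ (a.2 + b.2) c.1 = φ a.2 (φ b.2 c.1) := by
      rw [hhom, Equiv.Perm.mul_apply]
    simp only [zMul, h1, hall]
    exact Prod.ext (by ring) (by ring)
  -- additive index must be zero
  have hA2 : ∀ h : ZMod p, (∀ u v : ZMod m, φ h (u + v) = φ h u + φ h v) → h = 0 := by
    intro h hadd
    by_contra hne
    exact hex (fun g => all_additive hp hhom hne hadd g)
  -- membership characterization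
  have hmem : ∀ a : ZMod m × ZMod p,
      a ∈ Nu ↔ (a.2 = 0 ∧ ∀ k : ZMod p, InA φ (φ k a.1)) := by
    intro a
    rw [hNu]
    constructor
    · rintro ⟨hl, _, hr⟩
      have ha2 : a.2 = 0 := by
        apply hA2
        intro u v
        have h := congrArg Prod.fst (hl (u, 0) (v, 0))
        simp only [zMul, hz, Equiv.Perm.one_apply, add_zero] at h
        have h' : a.1 + φ a.2 (u + v) = a.1 + (φ a.2 u + φ a.2 v) := by
          rw [h]; ring
        exact add_left_cancel h'
      refine ⟨ha2, ?_⟩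
      intro k g u
      have h := congrArg Prod.fst (hr (0, g) (u, k))
      simp only [zMul, ha2, add_zero, zero_add] at h
      have h2 : φ (g + k) a.1 = φ g (φ k a.1) := by rw [hhom, Equiv.Perm.mul_apply]
      rw [h2] at h
      rw [add_comm (φ k a.1) u, h, add_comm]
    · rintro ⟨ha2, hA⟩
      have hAa : InA φ a.1 := by
        have := hA 0
        rwa [hz, Equiv.Perm.one_apply] at this
      refine ⟨?_, ?_, ?_⟩
      · intro x y
        simp only [zMul, ha2, hz, Equiv.Perm.one_apply, zero_add]
        exact Prod.ext (by ring) (by ring)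
      · intro x y
        simp only [zMul, ha2, hz, Equiv.Perm.one_apply, add_zero]
        refine Prod.ext ?_ (by ring)
        rw [hAa x.2 y.1, add_assoc]
      · intro x y
        simp only [zMul, ha2, add_zero]
        refine Prod.ext ?_ (by ring)
        have h2 : φ (x.2 + y.2) a.1 = φ x.2 (φ y.2 a.1) := by
          rw [hhom, Equiv.Perm.mul_apply]
        rw [h2, add_comm y.1 (φ y.2 a.1), hA y.2 x.2 y.1]
        ring
  -- the subgroup
  let B : AddSubgroup (ZMod m) :=
    { carrier := {n : ZMod m | ∀ k : ZMod p, InA φ (φ k n)}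
      zero_mem' := by
        intro k
        rw [hφ0]
        exact InA_zero hφ0
      add_mem' := by
        intro n n' hn hn' k
        have hInn : InA φ n := by have := hn 0; rwa [hz, Equiv.Perm.one_apply] at this
        have : φ k (n + n') = φ k n + φ k n' := hInn k n'
        rw [this]
        exact (hn k).add (hn' k)
      neg_mem' := by
        intro n hn k
        have hInn : InA φ n := by have := hn 0; rwa [hz, Equiv.Perm.one_apply] at this
        rw [hInn.neg_apply hφ0 k]
        exact (hn k).neg hφ0 }
  have hmemB : ∀ n : ZMod m, n ∈ B ↔ ∀ k : ZMod p, InA φ (φ k n) := fun _ => Iff.rfl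
  refine ⟨?_, ?_, ?_, ?_, ?_⟩
  · exact (hmem _).2 ⟨rfl, B.zero_mem⟩
  · intro a ha b hb
    obtain ⟨ha2, haB⟩ := (hmem a).1 ha
    obtain ⟨hb2, hbB⟩ := (hmem b).1 hb
    refine (hmem _).2 ⟨?_, ?_⟩
    · simp [zMul, ha2, hb2]
    · simp only [zMul, ha2, hz, Equiv.Perm.one_apply]
      exact B.add_mem haB hbB
  · intro a ha b hb c hc
    obtain ⟨ha2, _⟩ := (hmem a).1 ha
    obtain ⟨hb2, _⟩ := (hmem b).1 hb
    simp only [zMul, ha2, hb2, hz, Equiv.Perm.one_apply, zero_add, add_zero]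
    exact Prod.ext (by ring) (by ring)
  · intro a ha
    obtain ⟨ha2, haB⟩ := (hmem a).1 ha
    refine ⟨(-a.1, 0), (hmem _).2 ⟨rfl, B.neg_mem haB⟩, ?_, ?_⟩ <;>
      simp [zMul, ha2, hz, Prod.ext_iff]
  · refine ⟨Nat.card B, ?_, ?_, ?_⟩
    · have := AddSubgroup.card_addSubgroup_dvd_card B
      rwa [Nat.card_zmod] at this
    · intro hcard
      have htop : B = ⊤ := by
        apply AddSubgroup.eq_top_of_card_eq
        rw [hcard, Nat.card_zmod]
      apply hex
      intro g u v
      have hu : u ∈ B := htop ▸ AddSubgroup.mem_top u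
      have hInu : InA φ u := by have := hu 0; rwa [hz, Equiv.Perm.one_apply] at this
      exact hInu g v
    · apply Nat.card_congr
      exact
        { toFun := fun x => ⟨x.1.1, ((hmem x.1).1 x.2).2⟩
          invFun := fun n => ⟨(n.1, 0), (hmem _).2 ⟨rfl, n.2⟩⟩
          left_inv := by
            rintro ⟨a, ha⟩
            have := ((hmem a).1 ha).1
            exact Subtype.ext (Prod.ext rfl this.symm)
          right_inv := fun n => rfl }
end
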